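/- Let p ∈ (0,1] and let U be a p-Banach space of almost universal disposition for finite-dimensional p-Banach spaces. Then U is locally 1⁺-injective amongst p-Banach spaces: for every λ > 1, every finite-dimensional p-Banach space X, every subspace Y of X and every nonexpansive linear operator t : Y → U, there exists a linear operator T : X → U with T y = t y for all y ∈ Y and N(T x) ≤ λ * N x for all x ∈ X. -/

import Mathlib

/- Common framework: p-normed and p-Banach spaces, following the paper's definitions. -/

namespace PGurarii

/-- A `p`-norm on a real vector space: `N x = 0 ↔ x = 0`, absolute homogeneity, and the
`p`-triangle inequality `N (x + y) ^ p ≤ N x ^ p + N y ^ p` (values in `ℝ₊`). -/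
structure PNorm (p : ℝ) (X : Type) [AddCommGroup X] [Module ℝ X] where
  N : X → ℝ
  nonneg : ∀ x : X, 0 ≤ N x
  eq_zero_iff : ∀ x : X, N x = 0 ↔ x = 0
  smul_eq : ∀ (a : ℝ) (x : X), N (a • x) = |a| * N x
  add_pow_le : ∀ x y : X, N (x + y) ^ p ≤ N x ^ p + N y ^ p

/-- Completeness (sequential) for the induced metric `d(x,y) = N (x - y) ^ p`. -/
def IsCompleteP (p : ℝ) {X : Type} [AddCommGroup X] [Module ℝ X] (NX : PNorm p X) : Prop :=
  ∀ u : ℕ → X,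
    (∀ ε : ℝ, 0 < ε → ∃ n₀ : ℕ, ∀ m ≥ n₀, ∀ n ≥ n₀, NX.N (u m - u n) ^ p < ε) →
    ∃ x : X, ∀ ε : ℝ, 0 < ε → ∃ n₀ : ℕ, ∀ n ≥ n₀, NX.N (u n - x) ^ p < ε

/-- Separability for the induced metric topology. -/
def IsSeparableP (p : ℝ) {X : Type} [AddCommGroup X] [Module ℝ X] (NX : PNorm p X) : Prop :=
  ∃ D : Set X, D.Countable ∧ ∀ x : X, ∀ ε : ℝ, 0 < ε → ∃ y ∈ D, NX.N (x - y) ^ p < ε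

/-- A subspace is closed for the induced metric topology. -/
def IsClosedSubP (p : ℝ) {X : Type} [AddCommGroup X] [Module ℝ X] (NX : PNorm p X)
    (S : Submodule ℝ X) : Prop :=
  ∀ x : X, (∀ ε : ℝ, 0 < ε → ∃ y ∈ S, NX.N (x - y) ^ p < ε) → x ∈ S

/-- The restriction of a `p`-norm to a subspace. -/
def PNorm.restrict {p : ℝ} {X : Type} [AddCommGroup X] [Module ℝ X]
    (NX : PNorm p X) (S : Submodule ℝ X) : PNorm p S where
  N x := NX.N x
  nonneg x := NX.nonneg x
  eq_zero_iff x := by rw [NX.eq_zero_iff]; exact ZeroMemClass.coe_eq_zero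
  smul_eq a x := NX.smul_eq a x
  add_pow_le x y := NX.add_pow_le x y

/-- A `p`-Banach space: a real vector space with a `p`-norm, complete for the induced metric. -/
structure PBanach (p : ℝ) where
  carrier : Type
  [addCommGroup : AddCommGroup carrier]
  [module : Module ℝ carrier]
  pnorm : PNorm p carrier
  complete : IsCompleteP p pnorm

attribute [instance] PBanach.addCommGroup PBanach.module

/-- `U` is of almost universal disposition for finite-dimensional `p`-Banach spaces: for every
`ε > 0`, every isometry from a subspace `X` of `U` (with the restricted `p`-norm) into a
finite-dimensional `p`-Banach space `Y` extends, after an `ε`-isometry `Y → U`, the inclusion. -/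
def AUD (p : ℝ) (U : Type) [AddCommGroup U] [Module ℝ U] (NU : PNorm p U) : Prop :=
  ∀ ε : ℝ, 0 < ε → ∀ Y : PBanach p, FiniteDimensional ℝ Y.carrier →
    ∀ (Xs : Submodule ℝ U) (g : Xs →ₗ[ℝ] Y.carrier),
      (∀ x : Xs, Y.pnorm.N (g x) = NU.N (x : U)) →
      ∃ f : Y.carrier →ₗ[ℝ] U,
        (∀ y, (1 - ε) * Y.pnorm.N y ≤ NU.N (f y) ∧ NU.N (f y) ≤ (1 + ε) * Y.pnorm.N y) ∧
        ∀ x : Xs, f (g x) = (x : U)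

/-- `U` is of universal disposition for separable `p`-Banach spaces. -/
def UD (p : ℝ) (U : Type) [AddCommGroup U] [Module ℝ U] (NU : PNorm p U) : Prop :=
  ∀ Y : PBanach p, IsSeparableP p Y.pnorm →
    ∀ (Xs : Submodule ℝ U), IsClosedSubP p NU Xs →
      ∀ g : Xs →ₗ[ℝ] Y.carrier, (∀ x : Xs, Y.pnorm.N (g x) = NU.N (x : U)) →
        ∃ f : Y.carrier →ₗ[ℝ] U, (∀ y, NU.N (f y) = Y.pnorm.N y) ∧ ∀ x : Xs, f (g x) = (x : U)

end PGurarii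

/-!
Form the pushout of `X ⊇ Y → U` among `p`-normed spaces: the function
`ρ x = inf_{y ∈ Y} (‖x - y‖ ^ p + ‖t y‖ ^ p)` is subadditive and `p`-homogeneous, so `ρ ^ (1/p)`
is a `p`-norm on `W = X / {ρ = 0}`. Since `t` is nonexpansive, `t y ↦ [y]` is an isometry of `t(Y)`
into the finite-dimensional (hence complete) space `W`, and `X → W` is nonexpansive. Almost
universal disposition gives a `(λ - 1)`-isometry `f : W → U` fixing `t(Y)`, and
`T = f ∘ (X → W)` works.
-/

open Filter Topology

theorem LinearMap.exists_comp_rangeRestrict_eq {R M N P : Type*} [Ring R] [AddCommGroup M]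
    [AddCommGroup N] [AddCommGroup P] [Module R M] [Module R N] [Module R P]
    (t : M →ₗ[R] N) (s : M →ₗ[R] P) (h : LinearMap.ker t ≤ LinearMap.ker s) :
    ∃ g : LinearMap.range t →ₗ[R] P, g ∘ₗ t.rangeRestrict = s :=
  ⟨(LinearMap.ker t).liftQ s h ∘ₗ t.quotKerEquivRange.symm.toLinearMap, LinearMap.ext fun y =>
    congrArg ((LinearMap.ker t).liftQ s h) (t.quotKerEquivRange_symm_apply_image y _)⟩

namespace PGurarii

namespace PNorm

variable {p : ℝ} {X : Type} [AddCommGroup X] [Module ℝ X] (NX : PNorm p X)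

theorem N_zero : NX.N 0 = 0 := (NX.eq_zero_iff 0).mpr rfl

theorem rpow_N_sum_le (hp : p ≠ 0) {ι : Type*} (s : Finset ι) (f : ι → X) :
    NX.N (∑ i ∈ s, f i) ^ p ≤ ∑ i ∈ s, NX.N (f i) ^ p := by
  classical
  induction s using Finset.cons_induction with
  | empty => simp [NX.N_zero, Real.zero_rpow hp]
  | cons i s _ ih =>
    rw [Finset.sum_cons, Finset.sum_cons]
    exact (NX.add_pow_le _ _).trans (by linarith)

theorem rpow_N_sub_rpow_N_le (x y : X) : NX.N x ^ p - NX.N y ^ p ≤ NX.N (x - y) ^ p := by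
  have := NX.add_pow_le (x - y) y
  rw [sub_add_cancel] at this
  linarith

def comap {Y : Type} [AddCommGroup Y] [Module ℝ Y] (e : Y ≃ₗ[ℝ] X) : PNorm p Y where
  N y := NX.N (e y)
  nonneg _ := NX.nonneg _
  eq_zero_iff y := by rw [NX.eq_zero_iff, e.map_eq_zero_iff]
  smul_eq a y := by rw [map_smul, NX.smul_eq]
  add_pow_le y y' := by rw [map_add]; exact NX.add_pow_le _ _

theorem isCompleteP_of_comap {Y : Type} [AddCommGroup Y] [Module ℝ Y] (e : Y ≃ₗ[ℝ] X)
    (h : IsCompleteP p (NX.comap e)) : IsCompleteP p NX := by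
  intro u hu
  obtain ⟨y, hy⟩ := h (e.symm ∘ u) (by simpa [comap] using hu)
  exact ⟨e y, by simpa [comap] using hy⟩

section Pi

variable {ι : Type} [Fintype ι] (N : PNorm p (ι → ℝ))

theorem exists_rpow_N_le_mul_norm_rpow (hp : 0 < p) :
    ∃ C, ∀ v, N.N v ^ p ≤ C * ‖v‖ ^ p := by
  classical
  refine ⟨∑ i, N.N (Pi.single i 1) ^ p, fun v => ?_⟩
  calc N.N v ^ p = N.N (∑ i, v i • Pi.single i 1) ^ p := by rw [← pi_eq_sum_univ' v]
    _ ≤ ∑ i, N.N (v i • Pi.single i 1) ^ p := N.rpow_N_sum_le hp.ne' _ _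
    _ = ∑ i, |v i| ^ p * N.N (Pi.single i 1) ^ p := by
      simp only [N.smul_eq, Real.mul_rpow (abs_nonneg _) (N.nonneg _)]
    _ ≤ ∑ i, ‖v‖ ^ p * N.N (Pi.single i 1) ^ p := by
      gcongr with i
      · exact Real.rpow_nonneg (N.nonneg _) p
      · exact norm_le_pi_norm v i
    _ = (∑ i, N.N (Pi.single i 1) ^ p) * ‖v‖ ^ p := by rw [← Finset.mul_sum, mul_comm]

theorem continuous_rpow_N (hp : 0 < p) : Continuous fun v => N.N v ^ p := by
  obtain ⟨C, hC⟩ := N.exists_rpow_N_le_mul_norm_rpow hp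
  refine continuous_iff_continuousAt.2 fun b => ?_
  have hlim : Tendsto (fun a => C * ‖a - b‖ ^ p) (𝓝 b) (𝓝 0) := by
    have : Continuous fun a => C * ‖a - b‖ ^ p :=
      continuous_const.mul ((continuous_id.sub continuous_const).norm.rpow_const
        fun _ => Or.inr hp.le)
    simpa [Real.zero_rpow hp.ne'] using this.tendsto b
  rw [ContinuousAt, tendsto_iff_norm_sub_tendsto_zero]
  refine squeeze_zero (fun _ => norm_nonneg _) (fun a => ?_) hlim
  rw [Real.norm_eq_abs, abs_sub_le_iff]
  refine ⟨(N.rpow_N_sub_rpow_N_le a b).trans (hC _), (N.rpow_N_sub_rpow_N_le b a).trans ?_⟩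
  rw [← norm_neg, neg_sub]
  exact hC _

theorem exists_pos_mul_norm_rpow_le (hp : 0 < p) :
    ∃ m > 0, ∀ v, m * ‖v‖ ^ p ≤ N.N v ^ p := by
  rcases isEmpty_or_nonempty ι with _ | _
  · exact ⟨1, one_pos, fun v => by simp [Subsingleton.elim v 0, N.N_zero, Real.zero_rpow hp.ne']⟩
  obtain ⟨a, ha, hmin⟩ := (isCompact_sphere (0 : ι → ℝ) 1).exists_isMinOn
    (NormedSpace.sphere_nonempty.2 zero_le_one) (N.continuous_rpow_N hp).continuousOn
  have ha0 : a ≠ 0 := ne_zero_of_mem_unit_sphere ⟨a, ha⟩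
  refine ⟨N.N a ^ p, Real.rpow_pos_of_pos ((N.nonneg a).lt_of_ne
    (fun h => ha0 ((N.eq_zero_iff a).1 h.symm))) p, fun v => ?_⟩
  rcases eq_or_ne v 0 with rfl | hv
  · simp [N.N_zero, Real.zero_rpow hp.ne']
  have hvn : 0 < ‖v‖ := norm_pos_iff.2 hv
  have hw : ‖v‖⁻¹ • v ∈ Metric.sphere (0 : ι → ℝ) 1 := by
    simp [norm_smul, hvn.ne']
  calc N.N a ^ p * ‖v‖ ^ p ≤ N.N (‖v‖⁻¹ • v) ^ p * ‖v‖ ^ p :=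
        mul_le_mul_of_nonneg_right (hmin hw) (by positivity)
    _ = N.N v ^ p := by
      rw [N.smul_eq, abs_inv, abs_norm, Real.mul_rpow (by positivity) (N.nonneg _),
        Real.inv_rpow hvn.le, mul_comm, ← mul_assoc, mul_inv_cancel₀ (by positivity), one_mul]

theorem isCompleteP_pi (hp : 0 < p) : IsCompleteP p N := by
  obtain ⟨m, hm, hmN⟩ := N.exists_pos_mul_norm_rpow_le hp
  intro u hu
  have hcauchy : CauchySeq u := by
    rw [Metric.cauchySeq_iff]
    intro ε hε
    obtain ⟨n₀, hn₀⟩ := hu (m * ε ^ p) (by positivity)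
    refine ⟨n₀, fun k hk l hl => ?_⟩
    rw [dist_eq_norm, ← Real.rpow_lt_rpow_iff (norm_nonneg _) hε.le hp]
    exact lt_of_mul_lt_mul_left ((hmN _).trans_lt (hn₀ k hk l hl)) hm.le
  obtain ⟨a, ha⟩ := cauchySeq_tendsto_of_complete hcauchy
  have hlim : Tendsto (fun k => N.N (u k - a) ^ p) atTop (𝓝 0) := by
    simpa [Function.comp_def, N.N_zero, Real.zero_rpow hp.ne'] using
      ((N.continuous_rpow_N hp).tendsto 0).comp (tendsto_sub_nhds_zero_iff.2 ha)
  exact ⟨a, fun ε hε => eventually_atTop.1 (hlim.eventually (gt_mem_nhds hε))⟩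

end Pi

theorem isCompleteP_of_finiteDimensional (hp : 0 < p) [FiniteDimensional ℝ X] :
    IsCompleteP p NX :=
  NX.isCompleteP_of_comap (Module.finBasis ℝ X).equivFun.symm ((NX.comap _).isCompleteP_pi hp)

end PNorm

structure PHomSeminorm (p : ℝ) (X : Type) [AddCommGroup X] [Module ℝ X] where
  toFun : X → ℝ
  nonneg : ∀ x, 0 ≤ toFun x
  add_le : ∀ x y, toFun (x + y) ≤ toFun x + toFun y
  smul_eq : ∀ (a : ℝ) x, toFun (a • x) = |a| ^ p * toFun x

namespace PHomSeminorm

variable {p : ℝ} {X : Type} [AddCommGroup X] [Module ℝ X] (ρ : PHomSeminorm p X)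

instance : CoeFun (PHomSeminorm p X) fun _ => X → ℝ := ⟨toFun⟩

theorem map_neg (x : X) : ρ (-x) = ρ x := by
  rw [← neg_one_smul ℝ x, ρ.smul_eq, abs_neg, abs_one, Real.one_rpow, one_mul]

theorem eq_of_sub_eq_zero {x x' : X} (h : ρ (x - x') = 0) : ρ x = ρ x' := by
  have h₁ := ρ.add_le x' (x - x')
  have h₂ := ρ.add_le x (x' - x)
  rw [add_sub_cancel] at h₁ h₂
  rw [← neg_sub, ρ.map_neg] at h₂
  linarith

def ker (hp : p ≠ 0) : Submodule ℝ X where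
  carrier := {x | ρ x = 0}
  add_mem' {x y} (hx : ρ x = 0) (hy : ρ y = 0) :=
    le_antisymm ((ρ.add_le x y).trans_eq (by rw [hx, hy, add_zero])) (ρ.nonneg _)
  zero_mem' := by
    show ρ 0 = 0
    rw [← zero_smul ℝ (0 : X), ρ.smul_eq, abs_zero, Real.zero_rpow hp, zero_mul]
  smul_mem' a x (hx : ρ x = 0) := by
    show ρ (a • x) = 0
    rw [ρ.smul_eq, hx, mul_zero]

theorem mem_ker {hp : p ≠ 0} {x : X} : x ∈ ρ.ker hp ↔ ρ x = 0 := Iff.rfl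

noncomputable def toPNorm (hp : p ≠ 0) : PNorm p (X ⧸ ρ.ker hp) where
  N := Quotient.lift (fun x => ρ x ^ p⁻¹) fun x x' h =>
    congrArg (· ^ p⁻¹) (ρ.eq_of_sub_eq_zero ((Submodule.quotientRel_def _).1 h))
  nonneg w := Submodule.Quotient.induction_on _ w fun x => Real.rpow_nonneg (ρ.nonneg x) _
  eq_zero_iff w := Submodule.Quotient.induction_on _ w fun x => by
    change ρ x ^ p⁻¹ = 0 ↔ _
    rw [Real.rpow_eq_zero (ρ.nonneg x) (inv_ne_zero hp), Submodule.Quotient.mk_eq_zero, mem_ker]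
  smul_eq a w := Submodule.Quotient.induction_on _ w fun x => by
    change ρ (a • x) ^ p⁻¹ = |a| * ρ x ^ p⁻¹
    rw [ρ.smul_eq, Real.mul_rpow (by positivity) (ρ.nonneg x),
      Real.rpow_rpow_inv (abs_nonneg a) hp]
  add_pow_le w w' := Submodule.Quotient.induction_on _ w fun x =>
    Submodule.Quotient.induction_on _ w' fun x' => by
      change (ρ (x + x') ^ p⁻¹) ^ p ≤ (ρ x ^ p⁻¹) ^ p + (ρ x' ^ p⁻¹) ^ p
      simp only [Real.rpow_inv_rpow (ρ.nonneg _) hp]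
      exact ρ.add_le x x'

theorem toPNorm_mk_eq (hp : p ≠ 0) {x : X} {c : ℝ} (hc : 0 ≤ c) (h : ρ x = c ^ p) :
    (ρ.toPNorm hp).N (Submodule.Quotient.mk x) = c :=
  (congrArg (· ^ p⁻¹) h).trans (Real.rpow_rpow_inv hc hp)

theorem toPNorm_mk_le (hp : 0 < p) {x : X} {c : ℝ} (hc : 0 ≤ c) (h : ρ x ≤ c ^ p) :
    (ρ.toPNorm hp.ne').N (Submodule.Quotient.mk x) ≤ c :=
  (Real.rpow_le_rpow (ρ.nonneg x) h (inv_nonneg.2 hp.le)).trans_eq (Real.rpow_rpow_inv hc hp.ne')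

end PHomSeminorm

section Pushout

variable {p : ℝ} {X U : Type} [AddCommGroup X] [Module ℝ X] [AddCommGroup U] [Module ℝ U]
  (NX : PNorm p X) (NU : PNorm p U) {Y : Submodule ℝ X} (t : Y →ₗ[ℝ] U)

/-- The `p`-th power of the pushout p-norm of `X ⊇ Y → U` (the quotient of `X × U` by the graph
of `-t`), restricted to `X`. -/
noncomputable def pushoutRpow (x : X) : ℝ := ⨅ y : Y, NX.N (x - y) ^ p + NU.N (t y) ^ p

private theorem rpow_N_add_rpow_N_nonneg (x : X) (y : Y) : 0 ≤ NX.N (x - y) ^ p + NU.N (t y) ^ p :=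
  add_nonneg (Real.rpow_nonneg (NX.nonneg _) p) (Real.rpow_nonneg (NU.nonneg _) p)

theorem pushoutRpow_le (x : X) (y : Y) :
    pushoutRpow NX NU t x ≤ NX.N (x - y) ^ p + NU.N (t y) ^ p :=
  ciInf_le ⟨0, by rintro _ ⟨y, rfl⟩; exact rpow_N_add_rpow_N_nonneg NX NU t x y⟩ y

theorem pushoutRpow_nonneg (x : X) : 0 ≤ pushoutRpow NX NU t x :=
  le_ciInf (rpow_N_add_rpow_N_nonneg NX NU t x)

theorem pushoutRpow_add_le (x x' : X) :
    pushoutRpow NX NU t (x + x') ≤ pushoutRpow NX NU t x + pushoutRpow NX NU t x' :=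
  le_ciInf_add_ciInf fun y y' => by
    refine (pushoutRpow_le NX NU t _ (y + y')).trans ?_
    have hX := NX.add_pow_le (x - y) (x' - y')
    have hU := NU.add_pow_le (t y) (t y')
    rw [map_add, Submodule.coe_add, add_sub_add_comm]
    linarith

theorem pushoutRpow_smul (hp : p ≠ 0) (a : ℝ) (x : X) :
    pushoutRpow NX NU t (a • x) = |a| ^ p * pushoutRpow NX NU t x := by
  rcases eq_or_ne a 0 with rfl | ha
  · refine le_antisymm ?_ ?_
    · simpa [NX.N_zero, NU.N_zero, Real.zero_rpow hp] using pushoutRpow_le NX NU t 0 0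
    · simpa [Real.zero_rpow hp] using pushoutRpow_nonneg NX NU t 0
  calc pushoutRpow NX NU t (a • x)
      = ⨅ y : Y, NX.N (a • x - (a • y : Y)) ^ p + NU.N (t (a • y)) ^ p :=
        ((LinearEquiv.smulOfNeZero ℝ Y a ha).surjective.iInf_comp
          fun y : Y => NX.N (a • x - y) ^ p + NU.N (t y) ^ p).symm
    _ = ⨅ y : Y, |a| ^ p * (NX.N (x - y) ^ p + NU.N (t y) ^ p) := by
        congr 1 with y
        rw [Submodule.coe_smul, ← smul_sub, map_smul, NX.smul_eq, NU.smul_eq,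
          Real.mul_rpow (abs_nonneg a) (NX.nonneg _), Real.mul_rpow (abs_nonneg a) (NU.nonneg _),
          mul_add]
    _ = |a| ^ p * pushoutRpow NX NU t x := (Real.mul_iInf_of_nonneg (by positivity) _).symm

noncomputable def pushoutSeminorm (hp : p ≠ 0) : PHomSeminorm p X where
  toFun := pushoutRpow NX NU t
  nonneg := pushoutRpow_nonneg NX NU t
  add_le := pushoutRpow_add_le NX NU t
  smul_eq := pushoutRpow_smul NX NU t hp

theorem pushoutRpow_le_rpow_N (hp : p ≠ 0) (x : X) : pushoutRpow NX NU t x ≤ NX.N x ^ p := by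
  simpa [NU.N_zero, Real.zero_rpow hp] using pushoutRpow_le NX NU t x 0

theorem pushoutRpow_coe (hp : 0 < p) (ht : ∀ y : Y, NU.N (t y) ≤ NX.N y) (y : Y) :
    pushoutRpow NX NU t y = NU.N (t y) ^ p := by
  refine le_antisymm ?_ (le_ciInf fun y' => ?_)
  · simpa [NX.N_zero, Real.zero_rpow hp.ne'] using pushoutRpow_le NX NU t y y
  · have hsub := NU.rpow_N_sub_rpow_N_le (t y) (t y')
    have hle : NU.N (t y - t y') ^ p ≤ NX.N (y - y' : X) ^ p := by
      rw [← map_sub, ← Submodule.coe_sub]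
      exact Real.rpow_le_rpow (NU.nonneg _) (ht _) hp.le
    linarith

end Pushout

theorem statement12 (p : ℝ) (hp0 : 0 < p)
    (U : PBanach p) (hUaud : AUD p U.carrier U.pnorm) :
    ∀ lam : ℝ, 1 < lam →
      ∀ X : PBanach p, FiniteDimensional ℝ X.carrier →
        ∀ (Y : Submodule ℝ X.carrier) (t : Y →ₗ[ℝ] U.carrier),
          (∀ y : Y, U.pnorm.N (t y) ≤ X.pnorm.N (y : X.carrier)) →
          ∃ T : X.carrier →ₗ[ℝ] U.carrier,
            (∀ y : Y, T (y : X.carrier) = t y) ∧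
            ∀ x : X.carrier, U.pnorm.N (T x) ≤ lam * X.pnorm.N x := by
  intro lam hlam X hXfd Y t ht
  set ρ := pushoutSeminorm X.pnorm U.pnorm t hp0.ne'
  set K := ρ.ker hp0.ne'
  let W : PBanach p :=
    ⟨X.carrier ⧸ K, ρ.toPNorm hp0.ne', PNorm.isCompleteP_of_finiteDimensional _ hp0⟩
  have hρ_coe (y : Y) : ρ y = U.pnorm.N (t y) ^ p := pushoutRpow_coe _ _ t hp0 ht y
  have hker : LinearMap.ker t ≤ LinearMap.ker (K.mkQ ∘ₗ Y.subtype) := fun y hy =>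
    (Submodule.Quotient.mk_eq_zero K).2 <| by
      rw [ρ.mem_ker, Submodule.subtype_apply, hρ_coe, LinearMap.mem_ker.1 hy, U.pnorm.N_zero,
        Real.zero_rpow hp0.ne']
  obtain ⟨g, hg⟩ := LinearMap.exists_comp_rangeRestrict_eq t _ hker
  have hg_apply (y : Y) : g ⟨t y, LinearMap.mem_range_self t y⟩ = K.mkQ y :=
    LinearMap.congr_fun hg y
  have hg_isometry (z : LinearMap.range t) : W.pnorm.N (g z) = U.pnorm.N z := by
    obtain ⟨_, y, rfl⟩ := z
    rw [hg_apply]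
    exact ρ.toPNorm_mk_eq hp0.ne' (U.pnorm.nonneg _) (hρ_coe y)
  obtain ⟨f, hf, hfg⟩ := hUaud (lam - 1) (by linarith) W inferInstance _ g hg_isometry
  refine ⟨f ∘ₗ K.mkQ, fun y => ?_, fun x => ?_⟩
  · rw [LinearMap.comp_apply, ← hg_apply]
    exact hfg _
  · have hWx : W.pnorm.N (K.mkQ x) ≤ X.pnorm.N x :=
      ρ.toPNorm_mk_le hp0 (X.pnorm.nonneg x) (pushoutRpow_le_rpow_N _ _ t hp0.ne' x)
    calc U.pnorm.N (f (K.mkQ x)) ≤ (1 + (lam - 1)) * W.pnorm.N (K.mkQ x) := (hf _).2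
      _ ≤ lam * X.pnorm.N x := by rw [add_sub_cancel]; gcongr

end PGurarii
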